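/- Let 0 < r < 1 and let α be irrational. Then there exist infinitely many N ∈ ℕ such that |{n ≤ N : r < |cos(nπα)|^n}| ≥ 5^{1/4}(1-r)^{1/4}N^{1/4}/(2√π). -/

import Mathlib

/-!
Take a good rational approximation `p / q` of `α` with `q` large, so that `θ = qα - p`
satisfies `|θ| < 1 / q`. For `n = iq` the factor `cos (nπα) = ± cos (iπθ)` is so close to `1`
that `|cos (nπα)|^n ≥ 1 - n (iπθ)² / 2 > 1 - π² i³ / (2q)`, which exceeds `r` as long as
`π² i³ ≤ 2 (1 - r) q`. Choosing `j ≈ (2 (1 - r) q / π²)^{1/3}` and `N = jq` gives at least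
`j ≍ ((1 - r) N)^{1/4}` admissible `n ≤ N`.
-/

open Real Filter Topology

namespace Irrational

lemma exists_pos_le_abs_mul_sub_round {α : ℝ} (hα : Irrational α) (M : ℕ) :
    ∃ ε > 0, ∀ k ∈ Finset.Icc 1 M, ε ≤ |(k : ℝ) * α - round ((k : ℝ) * α)| := by
  have hk : ∀ k ∈ Finset.Icc 1 M,
      ∀ᶠ ε in 𝓝[>] (0 : ℝ), ε ≤ |(k : ℝ) * α - round ((k : ℝ) * α)| := by
    intro k hk
    have hk0 : k ≠ 0 := by have := (Finset.mem_Icc.1 hk).1; omega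
    refine eventually_nhdsWithin_of_eventually_nhds (eventually_le_nhds ?_)
    exact abs_pos.2 (sub_ne_zero.2 ((hα.natCast_mul hk0).ne_int _))
  obtain ⟨ε, hε, hε0⟩ := (((eventually_all_finset _).2 hk).and self_mem_nhdsWithin).exists
  exact ⟨ε, hε0, hε⟩

/- Dirichlet gives `k ≤ n` with `|kα - round (kα)| ≤ 1 / (n + 1)`; for `n` large this is below
the positive minimum of these distances over `k ≤ M`, forcing `k > M`. -/
lemma exists_nat_gt_abs_mul_sub_lt_one_div {α : ℝ} (hα : Irrational α) (M : ℕ) :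
    ∃ q : ℕ, M < q ∧ ∃ p : ℤ, |(q : ℝ) * α - p| < 1 / q := by
  obtain ⟨ε, hε, hM⟩ := hα.exists_pos_le_abs_mul_sub_round M
  obtain ⟨n, hn⟩ := exists_nat_one_div_lt hε
  obtain ⟨k, hk0, hkn, hk⟩ := Real.exists_nat_abs_mul_sub_round_le α n.succ_pos
  have hkM : M < k := by
    by_contra! hkM
    have hn' : 1 / ((n + 1 : ℕ) + 1 : ℝ) ≤ 1 / (n + 1) := by gcongr; linarith
    linarith [hM k (Finset.mem_Icc.2 ⟨hk0, hkM⟩)]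
  refine ⟨k, hkM, round ((k : ℝ) * α), hk.trans_lt ?_⟩
  gcongr
  exact_mod_cast Nat.lt_succ_of_le hkn

end Irrational

lemma abs_cos_add_int_mul_pi (x : ℝ) (n : ℤ) : |cos (x + n * π)| = |cos x| := by
  rw [cos_add_int_mul_pi, abs_mul, abs_neg_one_zpow, one_mul]

lemma one_sub_mul_sq_div_two_le_abs_cos_pow (x : ℝ) (n : ℕ) :
    1 - n * (x ^ 2 / 2) ≤ |cos x| ^ n := by
  rcases le_or_gt (x ^ 2 / 2) 1 with hx | hx
  · have hcos : 1 + -(x ^ 2 / 2) ≤ |cos x| := by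
      linarith [one_sub_sq_div_two_le_cos (x := x), le_abs_self (cos x)]
    calc 1 - n * (x ^ 2 / 2) = 1 + n * -(x ^ 2 / 2) := by ring
      _ ≤ (1 + -(x ^ 2 / 2)) ^ n := one_add_mul_le_pow (by linarith) n
      _ ≤ |cos x| ^ n := pow_le_pow_left₀ (by linarith) hcos n
  · rcases n.eq_zero_or_pos with rfl | hn
    · simp
    · have hn' : (1 : ℝ) ≤ n := by exact_mod_cast hn
      nlinarith [pow_nonneg (abs_nonneg (cos x)) n]

lemma exists_nat_pow_le_lt_succ_pow {B : ℝ} (hB : 0 ≤ B) {m : ℕ} (hm : m ≠ 0) :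
    ∃ j : ℕ, (j : ℝ) ^ m ≤ B ∧ B < ((j : ℝ) + 1) ^ m := by
  set u := B ^ (m⁻¹ : ℝ)
  have hu : u ^ m = B := rpow_inv_natCast_pow hB hm
  have hu0 : 0 ≤ u := by positivity
  refine ⟨⌊u⌋₊, ?_, ?_⟩
  · rw [← hu]; exact pow_le_pow_left₀ (Nat.cast_nonneg _) (Nat.floor_le hu0) m
  · rw [← hu]; exact pow_lt_pow_left₀ (Nat.lt_floor_add_one u) hu0 hm

lemma exists_nat_cube_le_le_four_mul_cube {B : ℝ} (hB : 8 ≤ B) :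
    ∃ j : ℕ, 0 < j ∧ (j : ℝ) ^ 3 ≤ B ∧ B ≤ 4 * (j : ℝ) ^ 3 := by
  obtain ⟨j, hjB, hBj⟩ := exists_nat_pow_le_lt_succ_pow (by linarith) three_ne_zero
  have hj : 2 ≤ j := by
    have : (2 : ℝ) < j + 1 := lt_of_pow_lt_pow_left₀ 3 (by positivity) (by linarith)
    have : 2 < j + 1 := by exact_mod_cast this
    omega
  have hj' : (2 : ℝ) ≤ j := by exact_mod_cast hj
  refine ⟨j, by omega, hjB, ?_⟩
  nlinarith [sq_nonneg ((j : ℝ) - 2)]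

lemma rpow_quarter_mul_div_le {a b N j : ℝ} (ha : 0 ≤ a) (hb : 0 ≤ b) (hN : 0 ≤ N)
    (hj : 0 ≤ j) (h : a * b * N ≤ 16 * π ^ 2 * j ^ 4) :
    a ^ (1 / 4 : ℝ) * b ^ (1 / 4 : ℝ) * N ^ (1 / 4 : ℝ) / (2 * √π) ≤ j := by
  rw [div_le_iff₀ (by positivity), ← mul_rpow ha hb, ← mul_rpow (by positivity) hN, one_div,
    rpow_inv_le_iff_of_pos (by positivity) (by positivity) (by norm_num),
    show (4 : ℝ) = (4 : ℕ) by norm_num, rpow_natCast, mul_pow, mul_pow,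
    show √π ^ 4 = π ^ 2 by rw [show 4 = 2 * 2 by rfl, pow_mul, sq_sqrt pi_pos.le]]
  linarith

def largeCosPowIndices (r α : ℝ) (N : ℕ) : Set ℕ :=
  {n | 0 < n ∧ n ≤ N ∧ r < |cos (n * π * α)| ^ n}

section LargeCosPowIndices

variable {r α : ℝ} {q j : ℕ} {p : ℤ}

lemma mul_mem_largeCosPowIndices (hq : 0 < q) (hqα : |(q : ℝ) * α - p| < 1 / q)
    (hj : π ^ 2 * j ^ 3 ≤ 2 * (1 - r) * q) {i : ℕ} (hi : i ∈ Set.Icc 1 j) :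
    i * q ∈ largeCosPowIndices r α (j * q) := by
  obtain ⟨hi1, hij⟩ := hi
  set θ := (q : ℝ) * α - p with hθ
  have hq' : (0 : ℝ) < q := by exact_mod_cast hq
  have hi' : (0 : ℝ) < i := by exact_mod_cast hi1
  have hcos : |cos ((i * q : ℕ) * π * α)| = |cos (i * π * θ)| := by
    rw [← abs_cos_add_int_mul_pi (i * π * θ) (i * p), hθ]
    push_cast
    ring_nf
  have hqθ : (q : ℝ) * θ ^ 2 < 1 / q := by
    have : θ ^ 2 < (1 / q) ^ 2 := sq_lt_sq' (abs_lt.1 hqα).1 (abs_lt.1 hqα).2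
    calc (q : ℝ) * θ ^ 2 < q * (1 / q) ^ 2 := by gcongr
      _ = 1 / (q : ℝ) := by field_simp
  have hsmall : ((i * q : ℕ) : ℝ) * ((i * π * θ) ^ 2 / 2) < 1 - r :=
    calc ((i * q : ℕ) : ℝ) * ((i * π * θ) ^ 2 / 2) = π ^ 2 * i ^ 3 * (q * θ ^ 2) / 2 := by
          push_cast; ring
      _ < π ^ 2 * i ^ 3 * (1 / q) / 2 := by gcongr
      _ ≤ π ^ 2 * j ^ 3 * (1 / q) / 2 := by gcongr
      _ ≤ 1 - r := by
          rw [div_le_iff₀ two_pos, mul_one_div, div_le_iff₀ hq']; linarith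
  refine ⟨by positivity, Nat.mul_le_mul_right q hij, ?_⟩
  rw [hcos]
  linarith [one_sub_mul_sq_div_two_le_abs_cos_pow (i * π * θ) (i * q)]

lemma le_ncard_largeCosPowIndices (hq : 0 < q) (hqα : |(q : ℝ) * α - p| < 1 / q)
    (hj : π ^ 2 * j ^ 3 ≤ 2 * (1 - r) * q) :
    j ≤ (largeCosPowIndices r α (j * q)).ncard :=
  calc j = (Set.Icc 1 j).ncard := by simp
    _ ≤ _ := Set.ncard_le_ncard_of_injOn (· * q)
        (fun _ hi => mul_mem_largeCosPowIndices hq hqα hj hi)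
        (fun _ _ _ _ h => Nat.eq_of_mul_eq_mul_right hq h)
        ((Set.finite_Icc 1 (j * q)).subset fun _ hn => ⟨hn.1, hn.2.1⟩)

end LargeCosPowIndices

theorem stmt_10_general (r : ℝ) (hr1 : r < 1) (α : ℝ) (hα : Irrational α) :
    {N : ℕ | 0 < N ∧
      (5:ℝ) ^ ((1:ℝ)/4) * (1 - r) ^ ((1:ℝ)/4) * (N : ℝ) ^ ((1:ℝ)/4) /
          (2 * Real.sqrt Real.pi) ≤
        ({n : ℕ | 0 < n ∧ n ≤ N ∧
            r < |Real.cos (n * Real.pi * α)| ^ n}.ncard : ℝ)}.Infinite := by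
  refine Set.infinite_of_forall_exists_gt fun M => ?_
  have h1r : 0 < 1 - r := by linarith
  obtain ⟨q, hMq, p, hqα⟩ :=
    hα.exists_nat_gt_abs_mul_sub_lt_one_div (max M ⌈4 * π ^ 2 / (1 - r)⌉₊)
  have hq : 0 < q := by omega
  have hB : 8 ≤ 2 * (1 - r) * q / π ^ 2 := by
    have := (div_lt_iff₀ h1r).1 (Nat.lt_of_ceil_lt ((le_max_right _ _).trans_lt hMq))
    rw [le_div_iff₀ (by positivity)]
    linarith
  obtain ⟨j, hj0, hjB, hBj⟩ := exists_nat_cube_le_le_four_mul_cube hB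
  rw [le_div_iff₀ (by positivity)] at hjB
  rw [div_le_iff₀ (by positivity)] at hBj
  refine ⟨j * q, ⟨by positivity, ?_⟩, ?_⟩
  · calc _ ≤ (j : ℝ) := by
          refine rpow_quarter_mul_div_le (by norm_num) h1r.le (by positivity) (by positivity) ?_
          push_cast
          nlinarith [mul_le_mul_of_nonneg_left hBj (by positivity : (0 : ℝ) ≤ 5 * j), pi_pos]
      _ ≤ _ := by exact_mod_cast le_ncard_largeCosPowIndices hq hqα (by linarith)
  · exact ((le_max_left _ _).trans_lt hMq).trans_le (Nat.le_mul_of_pos_left q hj0)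

theorem stmt_10 (r : ℝ) (hr : 0 < r) (hr1 : r < 1) (α : ℝ) (hα : Irrational α) :
    {N : ℕ | 0 < N ∧
      (5:ℝ) ^ ((1:ℝ)/4) * (1 - r) ^ ((1:ℝ)/4) * (N : ℝ) ^ ((1:ℝ)/4) /
          (2 * Real.sqrt Real.pi) ≤
        ({n : ℕ | 0 < n ∧ n ≤ N ∧
            r < |Real.cos (n * Real.pi * α)| ^ n}.ncard : ℝ)}.Infinite :=
  stmt_10_general r hr1 α hα
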